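/- arXiv:math/0512484 — 6 statements merged into one kernel-verified Lean document; each statement's English description precedes it below -/
import Mathlib

section
/- Let G be a group and u, v ∈ G. Suppose that the centralizer of v in G equals the centralizer of v² in G, and that k ∈ G satisfies u² = k v² k⁻¹. Then u and v are conjugate in G if and only if u = k v k⁻¹. -/
/-- If `Z_G(v) = Z_G(v²)` and `u² = k v² k⁻¹`, then `u` and `v` are conjugate in `G`
iff `u = k v k⁻¹`. -/
theorem stmt_1 (G : Type*) [Group G] (u v k : G)
    (hZ : Subgroup.centralizer ({v} : Set G) = Subgroup.centralizer ({v ^ 2} : Set G))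
    (hk : u ^ 2 = k * v ^ 2 * k⁻¹) :
    (∃ h : G, u = h * v * h⁻¹) ↔ u = k * v * k⁻¹ := by
  constructor
  · rintro ⟨h, rfl⟩
    have h2 : h * v ^ 2 * h⁻¹ = k * v ^ 2 * k⁻¹ := by
      rw [← hk, sq, sq]; group
    have hc : (k⁻¹ * h) ∈ Subgroup.centralizer ({v ^ 2} : Set G) := by
      intro x hx
      rcases hx with rfl
      have : v ^ 2 * (k⁻¹ * h) = (k⁻¹ * h) * v ^ 2 := by
        have e : k⁻¹ * (h * v ^ 2 * h⁻¹) * k = v ^ 2 := by rw [h2]; group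
        calc v ^ 2 * (k⁻¹ * h) = (k⁻¹ * (h * v ^ 2 * h⁻¹) * k) * (k⁻¹ * h) := by rw [e]
          _ = (k⁻¹ * h) * v ^ 2 := by group
      simpa [mul_assoc] using this
    rw [← hZ] at hc
    have hv : v * (k⁻¹ * h) = (k⁻¹ * h) * v := hc v rfl
    have : h * v = k * ((k⁻¹ * h) * v) * h⁻¹ * h := by group
    rw [← hv] at this
    rw [show h * v * h⁻¹ = (h * v) * h⁻¹ from rfl, this]
    group
  · rintro rfl
    exact ⟨k, rfl⟩
end

section
/- Let K be a group containing an element t of infinite order such that the cyclic subgroup ⟨t⟩ has index 2 in K. If K contains a nontrivial element of finite order, then K is isomorphic either to ℤ × ℤ/2ℤ, or to the free product ℤ/2ℤ * ℤ/2ℤ (the infinite dihedral group). -/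
private lemma stmt7_abelian_case {K : Type*} [Group K] (t w : K) (ht : ¬ IsOfFinOrder t)
    (hw2 : w * w = 1) (hcomm : t * w = w * t) (hwH : w ∉ Subgroup.zpowers t)
    (hdec : ∀ g : K, g ∈ Subgroup.zpowers t ∨ ∃ a : ℤ, g = t ^ a * w) :
    Nonempty (K ≃* Multiplicative (ℤ × ZMod 2)) := by
  have hinj : Function.Injective fun n : ℤ => t ^ n :=
    injective_zpow_iff_not_isOfFinOrder.mpr ht
  have hC : Commute t w := hcomm
  have hw2' : w ^ 2 = 1 := by rwa [pow_two]
  have key : ∀ (a a' : ℤ) (b b' : ZMod 2),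
      t ^ (a + a') * w ^ ((b + b').val) = (t ^ a * w ^ b.val) * (t ^ a' * w ^ b'.val) := by
    intro a a' b b'
    have hcom : Commute (w ^ b.val) (t ^ a') := ((hC.zpow_left a').pow_right _).symm
    rw [ZMod.val_add, ← pow_eq_pow_mod _ hw2', zpow_add, pow_add,
      hcom.mul_mul_mul_comm]
  let φ : Multiplicative (ℤ × ZMod 2) →* K :=
    MonoidHom.mk' (fun x => t ^ (Multiplicative.toAdd x).1 * w ^ ((Multiplicative.toAdd x).2).val)
      (fun x y => key _ _ _ _)
  have haux : ∀ (a : ℤ) (b : ZMod 2), t ^ a * w ^ b.val = 1 → a = 0 ∧ b = 0 := by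
    intro a b h
    have hb : ∀ c : ZMod 2, c = 0 ∨ c = 1 := by decide
    have hv0 : (0 : ZMod 2).val = 0 := by decide
    have hv1 : (1 : ZMod 2).val = 1 := by decide
    rcases hb b with rfl | rfl
    · refine ⟨?_, rfl⟩
      rw [hv0, pow_zero, mul_one] at h
      have h' : t ^ a = t ^ (0 : ℤ) := by rwa [zpow_zero]
      exact hinj h'
    · exfalso
      rw [hv1, pow_one] at h
      refine hwH (Subgroup.mem_zpowers_iff.mpr ⟨-a, ?_⟩)
      rw [zpow_neg]
      exact (eq_inv_of_mul_eq_one_right h).symm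
  have hbij : Function.Bijective φ := by
    constructor
    · rw [injective_iff_map_eq_one]
      intro x hx
      have h := haux (Multiplicative.toAdd x).1 (Multiplicative.toAdd x).2 hx
      have : Multiplicative.toAdd x = (0 : ℤ × ZMod 2) := Prod.ext h.1 h.2
      simpa using Multiplicative.toAdd.injective (by simpa using this)
    · intro g
      rcases hdec g with hg | ⟨a, ha⟩
      · obtain ⟨a, ha⟩ := Subgroup.mem_zpowers_iff.mp hg
        exact ⟨Multiplicative.ofAdd (a, 0), by simp [φ, ha]⟩
      · refine ⟨Multiplicative.ofAdd (a, 1), ?_⟩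
        show t ^ a * w ^ (1 : ZMod 2).val = g
        rw [show (1 : ZMod 2).val = 1 by decide, pow_one, ha]
  exact ⟨(MulEquiv.ofBijective φ hbij).symm⟩

/-- The identity map `ZMod 0 → ℤ`. -/
private def stmt7_zmz (i : ZMod 0) : ℤ := i

private lemma stmt7_dihedral_case {K : Type*} [Group K] (t v : K) (ht : ¬ IsOfFinOrder t)
    (hv2 : v * v = 1) (hsemi : v * t = t⁻¹ * v) (hvH : v ∉ Subgroup.zpowers t)
    (hdec : ∀ g : K, g ∈ Subgroup.zpowers t ∨ ∃ a : ℤ, g = t ^ a * v) :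
    Nonempty (K ≃* DihedralGroup 0) := by
  have hinj : Function.Injective fun n : ℤ => t ^ n :=
    injective_zpow_iff_not_isOfFinOrder.mpr ht
  have hS : SemiconjBy v t t⁻¹ := hsemi
  have hs : ∀ a : ℤ, v * t ^ a = t ^ (-a) * v := by
    intro a
    have := (hS.zpow_right a : v * t ^ a = (t⁻¹) ^ a * v)
    rwa [inv_zpow, ← zpow_neg] at this
  have hs' : ∀ a : ℤ, t ^ a * v = v * t ^ (-a) := by
    intro a
    rw [hs (-a), neg_neg]
  let f : DihedralGroup 0 → K := fun g =>
    match g with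
    | .r i => t ^ stmt7_zmz i
    | .sr i => v * t ^ stmt7_zmz i
  have hadd : ∀ i j : ZMod 0, stmt7_zmz (i + j) = stmt7_zmz i + stmt7_zmz j :=
    fun _ _ => rfl
  have hsub : ∀ i j : ZMod 0, stmt7_zmz (i - j) = stmt7_zmz i - stmt7_zmz j :=
    fun _ _ => rfl
  have key : ∀ g h : DihedralGroup 0, f (g * h) = f g * f h := by
    rintro (i | i) (j | j)
    · show t ^ stmt7_zmz (i + j) = t ^ stmt7_zmz i * t ^ stmt7_zmz j
      rw [hadd, zpow_add]
    · show v * t ^ stmt7_zmz (j - i) = t ^ stmt7_zmz i * (v * t ^ stmt7_zmz j)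
      rw [hsub, ← mul_assoc, hs' (stmt7_zmz i), mul_assoc, ← zpow_add]
      ring_nf
    · show v * t ^ stmt7_zmz (i + j) = v * t ^ stmt7_zmz i * t ^ stmt7_zmz j
      rw [hadd, mul_assoc, ← zpow_add]
    · show t ^ stmt7_zmz (j - i) = v * t ^ stmt7_zmz i * (v * t ^ stmt7_zmz j)
      rw [hsub, mul_assoc, ← mul_assoc (t ^ stmt7_zmz i), hs' (stmt7_zmz i),
        ← mul_assoc, ← mul_assoc, hv2, one_mul, ← zpow_add]
      ring_nf
  let φ : DihedralGroup 0 →* K := MonoidHom.mk' f key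
  have hbij : Function.Bijective φ := by
    constructor
    · rw [injective_iff_map_eq_one]
      rintro (i | i) h
      · have h' : t ^ stmt7_zmz i = t ^ (0 : ℤ) := by
          rw [zpow_zero]; exact h
        have hi : stmt7_zmz i = 0 := hinj h'
        show DihedralGroup.r i = 1
        rw [show i = (0 : ZMod 0) from hi, DihedralGroup.one_def]
      · exfalso
        have h' : v * t ^ stmt7_zmz i = 1 := h
        refine hvH (Subgroup.mem_zpowers_iff.mpr ⟨-(stmt7_zmz i), ?_⟩)
        rw [zpow_neg, eq_inv_of_mul_eq_one_right h', inv_inv]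
    · intro g
      rcases hdec g with hg | ⟨a, ha⟩
      · obtain ⟨a, ha⟩ := Subgroup.mem_zpowers_iff.mp hg
        exact ⟨DihedralGroup.r (show ZMod 0 from a), ha⟩
      · refine ⟨DihedralGroup.sr (show ZMod 0 from -a), ?_⟩
        show v * t ^ stmt7_zmz (show ZMod 0 from -a) = g
        rw [show stmt7_zmz (show ZMod 0 from -a) = -a from rfl, ha, hs' a]
  exact ⟨(MulEquiv.ofBijective φ hbij).symm⟩

/-- A group `K` with an infinite-order element `t` such that `⟨t⟩` has index 2,
containing a nontrivial element of finite order, is isomorphic to `ℤ × ZMod 2` or to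
the infinite dihedral group `ℤ/2ℤ * ℤ/2ℤ`. -/
theorem stmt_7 (K : Type*) [Group K] (t : K) (ht : ¬ IsOfFinOrder t)
    (hidx : (Subgroup.zpowers t).index = 2)
    (htor : ∃ g : K, g ≠ 1 ∧ IsOfFinOrder g) :
    Nonempty (K ≃* Multiplicative (ℤ × ZMod 2)) ∨ Nonempty (K ≃* DihedralGroup 0) := by
  set H := Subgroup.zpowers t with hH
  have hinj : Function.Injective fun n : ℤ => t ^ n :=
    injective_zpow_iff_not_isOfFinOrder.mpr ht
  obtain ⟨v, hv⟩ := Subgroup.index_eq_two_iff.mp hidx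
  have hvH : v ∉ H := by
    rcases hv 1 with ⟨_, h2⟩ | ⟨_, h2⟩
    · exact absurd (one_mem H) h2
    · rwa [one_mul] at h2
  have hv2H : v * v ∈ H := by
    rcases hv v with ⟨h1, _⟩ | ⟨h1, _⟩
    · exact h1
    · exact absurd h1 hvH
  have htvH : v * t * v ∈ H := by
    rcases hv (v * t) with ⟨h1, _⟩ | ⟨h1, _⟩
    · exact h1
    · exact absurd (by simpa using mul_mem h1 (inv_mem (Subgroup.mem_zpowers t))) hvH
  have hdec : ∀ g : K, g ∈ H ∨ ∃ a : ℤ, g = t ^ a * v := by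
    intro g
    rcases hv (g * v⁻¹) with ⟨h1, _⟩ | ⟨h1, _⟩
    · left; simpa using h1
    · right
      obtain ⟨a, ha⟩ := Subgroup.mem_zpowers_iff.mp h1
      refine ⟨a, ?_⟩
      rw [ha]
      group
  obtain ⟨n, hn⟩ := Subgroup.mem_zpowers_iff.mp hv2H
  obtain ⟨m, hm⟩ := Subgroup.mem_zpowers_iff.mp htvH
  -- conjugation: v * t * v⁻¹ = t ^ (m - n)
  have hconj : v * t * v⁻¹ = t ^ (m - n) := by
    have h0 : v * t * v⁻¹ = (v * t * v) * (v * v)⁻¹ := by group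
    rw [h0, ← hm, ← hn, ← zpow_neg, ← zpow_add, show m + -n = m - n by ring]
  set μ : ℤ := m - n with hμ
  have hμsq : μ * μ = 1 := by
    have h1 : v * (v * t * v⁻¹) * v⁻¹ = t ^ (μ * μ) := by
      rw [hconj]
      calc v * t ^ μ * v⁻¹ = (v * t * v⁻¹) ^ μ :=
            (conj_zpow : (v * t * v⁻¹) ^ μ = v * t ^ μ * v⁻¹).symm
        _ = (t ^ μ) ^ μ := by rw [hconj]
        _ = t ^ (μ * μ) := (zpow_mul t μ μ).symm
    have h2 : v * (v * t * v⁻¹) * v⁻¹ = t := by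
      have hre : v * (v * t * v⁻¹) * v⁻¹ = (v * v) * t * (v * v)⁻¹ := by group
      rw [hre, ← hn]
      group
    have h3 : t ^ (μ * μ) = t ^ (1 : ℤ) := by rw [zpow_one]; exact h1.symm.trans h2
    exact hinj h3
  have hpow_ord : ∀ b : ℤ, IsOfFinOrder (t ^ b) → b = 0 := by
    intro b hb
    obtain ⟨k, hk0, hk⟩ := isOfFinOrder_iff_pow_eq_one.mp hb
    have heq : t ^ (b * (k : ℤ)) = t ^ (0 : ℤ) := by
      rw [zpow_zero, zpow_mul, zpow_natCast]; exact hk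
    have hbk := hinj heq
    have hkne : (k : ℤ) ≠ 0 := Int.natCast_ne_zero.mpr hk0.ne'
    exact (mul_eq_zero.mp hbk).resolve_right hkne
  rcases mul_self_eq_one_iff.mp hμsq with hμ1 | hμ1
  · -- commutative case
    left
    have hconj1 : v * t * v⁻¹ = t := by rw [hconj, hμ1, zpow_one]
    have hcomm : t * v = v * t := (mul_inv_eq_iff_eq_mul.mp hconj1).symm
    have hCtv : Commute t v := hcomm
    obtain ⟨g, hg1, hgfin⟩ := htor
    rcases hdec g with hg | ⟨a, ha⟩
    · exfalso
      obtain ⟨b, hb⟩ := Subgroup.mem_zpowers_iff.mp hg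
      have : b = 0 := hpow_ord b (hb ▸ hgfin)
      rw [this, zpow_zero] at hb
      exact hg1 hb.symm
    · have hgg : g * g = t ^ (2 * a + n) := by
        rw [ha]
        have h1 : v * t ^ a = t ^ a * v := ((hCtv.zpow_left a).symm).eq
        calc t ^ a * v * (t ^ a * v) = t ^ a * (v * t ^ a) * v := by group
          _ = t ^ a * (t ^ a * v) * v := by rw [h1]
          _ = (t ^ a * t ^ a) * (v * v) := by group
          _ = t ^ (2 * a + n) := by
                rw [← hn, ← zpow_add, ← zpow_add, show a + a + n = 2 * a + n by ring]
      have hfin2 : IsOfFinOrder (t ^ (2 * a + n)) := by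
        rw [← hgg, ← pow_two]; exact hgfin.pow
      have hz : 2 * a + n = 0 := hpow_ord _ hfin2
      have hgsq : g * g = 1 := by rw [hgg, hz, zpow_zero]
      have hgH : g ∉ H := by
        intro hgmem
        refine hvH ?_
        have : v = (t ^ a)⁻¹ * g := by rw [ha]; group
        rw [this]
        exact mul_mem (inv_mem (zpow_mem (Subgroup.mem_zpowers t) a)) hgmem
      have hcg : t * g = g * t := by
        rw [ha]
        have h1 : v * t = t * v := hcomm.symm
        calc t * (t ^ a * v) = t ^ a * (t * v) := by
              rw [← mul_assoc, ← mul_assoc, ← zpow_one_add, ← zpow_add_one]; ring_nf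
          _ = t ^ a * (v * t) := by rw [← h1]
          _ = t ^ a * v * t := by group
      have hdec' : ∀ x : K, x ∈ H ∨ ∃ c : ℤ, x = t ^ c * g := by
        intro x
        rcases hdec x with hx | ⟨b, hb⟩
        · exact Or.inl hx
        · refine Or.inr ⟨b - a, ?_⟩
          rw [hb, ha]
          rw [← mul_assoc, ← zpow_add]
          ring_nf
      exact stmt7_abelian_case t g ht hgsq hcg hgH hdec'
  · -- dihedral case
    right
    have hconj1 : v * t * v⁻¹ = t⁻¹ := by rw [hconj, hμ1, zpow_neg_one]
    have hsemi : v * t = t⁻¹ * v := mul_inv_eq_iff_eq_mul.mp hconj1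
    have hS : SemiconjBy v t t⁻¹ := hsemi
    have hn0 : n = 0 := by
      have h1 : v * t ^ n * v⁻¹ = t ^ (-n) := by
        have := (hS.zpow_right n : v * t ^ n = (t⁻¹) ^ n * v)
        rw [inv_zpow, ← zpow_neg] at this
        rw [this]
        group
      have h2 : v * t ^ n * v⁻¹ = t ^ n := by
        rw [hn]
        group
      have h3 : t ^ n = t ^ (-n) := h2.symm.trans h1
      have := hinj h3
      omega
    have hv2 : v * v = 1 := by rw [← hn, hn0, zpow_zero]
    exact stmt7_dihedral_case t v ht hv2 hsemi hvH hdec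
end

section
/- Let K be the Klein bottle group, realized as the semidirect product ℤ ⋊ ℤ with multiplication (n,m)·(n',m') = (n + (−1)^m n', m + m'). For any integers n₁, n₂, the centralizer in K of the element v = (n₂, 2n₁+1) is exactly the cyclic subgroup generated by (n₂, 1). -/
/-- The Klein bottle group realized as the semidirect product `ℤ ⋊ ℤ`,
with multiplication `(n,m)·(n',m') = (n + (−1)^m n', m + m')`. -/
@[ext] structure KleinBottle where
  n : ℤ
  m : ℤ

namespace KleinBottle

instance : Mul KleinBottle := ⟨fun a b => ⟨a.n + a.m.negOnePow * b.n, a.m + b.m⟩⟩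
instance : One KleinBottle := ⟨⟨0, 0⟩⟩
instance : Inv KleinBottle := ⟨fun a => ⟨-(a.m.negOnePow * a.n), -a.m⟩⟩

theorem mul_def (a b : KleinBottle) :
    a * b = ⟨a.n + a.m.negOnePow * b.n, a.m + b.m⟩ := rfl

theorem one_def : (1 : KleinBottle) = ⟨0, 0⟩ := rfl

theorem inv_def (a : KleinBottle) : a⁻¹ = ⟨-(a.m.negOnePow * a.n), -a.m⟩ := rfl

instance : Group KleinBottle where
  mul_assoc a b c := by
    ext <;> simp [mul_def, Int.negOnePow_add] <;> ring
  one_mul a := by ext <;> simp [mul_def, one_def]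
  mul_one a := by ext <;> simp [mul_def, one_def]
  inv_mul_cancel a := by
    ext <;> simp [mul_def, inv_def, one_def, Int.negOnePow_neg]

end KleinBottle

/-!
Commuting with an element `(c, m)` with `m` odd pins down the first coordinate of `g`: it must be
`0` if `g.m` is even and `c` if `g.m` is odd. Since `(c, 1)² = (0, 2)` and `(0, 2)^j = (0, 2j)`, the powers
`(c, 1)^k` are exactly these elements, `(0, k)` for even `k` and `(c, k)` for odd `k`.
-/

namespace KleinBottle

theorem mk_zero_zpow (m k : ℤ) : (⟨0, m⟩ : KleinBottle) ^ k = ⟨0, m * k⟩ := by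
  induction k using Int.induction_on with
  | zero => rw [zpow_zero, mul_zero, one_def]
  | succ k ih =>
    rw [zpow_add_one, ih, mul_def, mk.injEq]
    constructor <;> ring
  | pred k ih =>
    rw [zpow_sub_one, ih, inv_def, mul_def, mk.injEq]
    constructor <;> ring

theorem mk_mul_self_of_odd (c : ℤ) {m : ℤ} (hm : Odd m) :
    (⟨c, m⟩ : KleinBottle) * ⟨c, m⟩ = ⟨0, 2 * m⟩ := by
  rw [mul_def, Int.negOnePow_odd _ hm, mk.injEq]
  push_cast
  constructor <;> ring

theorem mk_one_zpow (c k : ℤ) :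
    (⟨c, 1⟩ : KleinBottle) ^ k = ⟨if Even k then 0 else c, k⟩ := by
  have hsq : (⟨c, 1⟩ : KleinBottle) ^ (2 : ℤ) = ⟨0, 2⟩ := by
    rw [zpow_two, mk_mul_self_of_odd c odd_one, mul_one]
  obtain ⟨j, rfl | rfl⟩ := Int.even_or_odd' k
  · rw [zpow_mul, hsq, mk_zero_zpow, if_pos (even_two_mul j)]
  · rw [zpow_add_one, zpow_mul, hsq, mk_zero_zpow, mul_def, if_neg (Int.not_even_two_mul_add_one j),
      Int.negOnePow_even _ (even_two_mul j)]
    simp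

theorem mem_centralizer_singleton_mk_iff (g : KleinBottle) (c : ℤ) {m : ℤ} (hm : Odd m) :
    g ∈ Subgroup.centralizer {⟨c, m⟩} ↔ g.n = if Even g.m then 0 else c := by
  rw [Subgroup.mem_centralizer_singleton_iff, mul_def, mul_def, mk.injEq,
    and_iff_left (add_comm _ _), Int.negOnePow_odd _ hm]
  rcases Int.even_or_odd g.m with he | ho
  · rw [if_pos he, Int.negOnePow_even _ he]
    push_cast
    omega
  · rw [if_neg (Int.not_even_iff_odd.mpr ho), Int.negOnePow_odd _ ho]
    push_cast
    omega

end KleinBottle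

/-- In the Klein bottle group, the centralizer of `v = (n₂, 2n₁+1)` is exactly the
cyclic subgroup generated by `(n₂, 1)`. -/
theorem stmt_8 (n₁ n₂ : ℤ) :
    Subgroup.centralizer ({⟨n₂, 2 * n₁ + 1⟩} : Set KleinBottle) =
      Subgroup.zpowers (⟨n₂, 1⟩ : KleinBottle) := by
  ext g
  rw [KleinBottle.mem_centralizer_singleton_mk_iff g n₂ (odd_two_mul_add_one n₁), Subgroup.mem_zpowers_iff]
  constructor
  · intro hg
    exact ⟨g.m, by rw [KleinBottle.mk_one_zpow, ← hg]⟩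
  · rintro ⟨k, rfl⟩
    simp [KleinBottle.mk_one_zpow]
end

section
/- Let K be the Klein bottle group, realized as the semidirect product ℤ ⋊ ℤ with multiplication (n,m)·(n',m') = (n + (−1)^m n', m + m'). For any integers n₁, n₂, the set of elements of K conjugate to v = (n₂, 2n₁+1) is exactly { (m, 2n₁+1) | m ∈ ℤ, m ≡ n₂ (mod 2) }. -/
/-- In the Klein bottle group, the conjugacy class of `v = (n₂, 2n₁+1)` is exactly
`{ (m, 2n₁+1) | m ≡ n₂ (mod 2) }`. -/
theorem stmt_9 (n₁ n₂ : ℤ) (u : KleinBottle) :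
    (∃ g : KleinBottle, u = g * ⟨n₂, 2 * n₁ + 1⟩ * g⁻¹) ↔
      ∃ m : ℤ, m % 2 = n₂ % 2 ∧ u = ⟨m, 2 * n₁ + 1⟩ := by
  constructor
  · rintro ⟨g, rfl⟩
    refine ⟨2 * g.n + (Int.negOnePow g.m : ℤ) * n₂, ?_, ?_⟩
    · rcases Int.units_eq_one_or g.m.negOnePow with h | h <;> rw [h] <;> push_cast <;> omega
    · rcases Int.units_eq_one_or g.m.negOnePow with h | h <;>
        ext <;>
        simp [KleinBottle.mul_def, KleinBottle.inv_def, Int.negOnePow_add,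
          Int.negOnePow_two_mul, h] <;> ring
  · rintro ⟨m, hm, rfl⟩
    refine ⟨⟨(m - n₂) / 2, 0⟩, ?_⟩
    ext <;>
      simp [KleinBottle.mul_def, KleinBottle.inv_def, Int.negOnePow_add,
        Int.negOnePow_two_mul] <;> omega
end

section
/- Let (G_i)_{i∈I} be a family of groups and G their free product, with canonical injections ι_i : G_i → G. If w ∈ G satisfies w² ≠ 1 and w² lies in the image of ι_i for some i, then w itself lies in the image of ι_i. -/
/-!
`w` commutes with `w² = ι_i g`, and `g ≠ 1`; so it suffices that the centralizer of a nontrivial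
element of a free factor lies in that factor. Write `w = ι_i a · t` with `t` a reduced word whose
first letter is outside `G_i`. If `t` is nonempty, then `t⁻¹ · ι_i (a⁻¹ g a) · t` is a reduced word
of length at least three, so by uniqueness of reduced words it cannot equal the single letter `ι_i g`.
-/

namespace Monoid.CoprodI

variable {ι : Type*}

theorem NeWord.toList_eq_of_prod_eq {M : ι → Type*} [∀ i, Monoid (M i)] {i j k l : ι}
    {w₁ : NeWord M i j} {w₂ : NeWord M k l} (h : w₁.prod = w₂.prod) :
    w₁.toList = w₂.toList := by
  classical
  exact congrArg Word.toList (Word.equiv.symm.injective h : w₁.toWord = w₂.toWord)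

theorem exists_eq_of_or_exists_eq_of_mul_neWord_prod {M : ι → Type*} [∀ i, Monoid (M i)]
    (i : ι) (w : CoprodI M) :
    (∃ a : M i, w = of a) ∨
      ∃ (a : M i) (k j : ι) (t : NeWord M k j), k ≠ i ∧ w = of a * t.prod := by
  classical
  set p := Word.equivPair i (Word.equiv w)
  have hw : w = of p.head * p.tail.prod := by
    rw [← Word.prod_rcons, ← Word.equivPair_symm, Equiv.symm_apply_apply]
    exact (Word.equiv.symm_apply_apply w).symm
  by_cases ht : p.tail = Word.empty
  · exact Or.inl ⟨p.head, by rw [hw, ht, Word.prod_empty, mul_one]⟩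
  · obtain ⟨k, j, t, htp⟩ := NeWord.of_word _ ht
    have hk : k ≠ i := fun hki => p.fstIdx_ne <| by
      simp [← htp, Word.fstIdx, NeWord.toWord, hki]
    exact Or.inr ⟨p.head, k, j, t, hk, by rw [hw, ← htp]; rfl⟩

theorem mem_range_of_commute_of {G : ι → Type*} [∀ i, Group (G i)] {i : ι} {g : G i}
    (hg : g ≠ 1) {w : CoprodI G} (hw : Commute w (of g)) :
    w ∈ (of : G i →* CoprodI G).range := by
  obtain ⟨a, rfl⟩ | ⟨a, k, j, t, hki, rfl⟩ := exists_eq_of_or_exists_eq_of_mul_neWord_prod i w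
  · exact ⟨a, rfl⟩
  exfalso
  set g' := a⁻¹ * g * a
  have hg' : g' ≠ 1 := by simpa [g'] using (conj_eq_one_iff (a := a⁻¹)).not.mpr hg
  have hconj : t.prod⁻¹ * of g' * t.prod = of g :=
    calc t.prod⁻¹ * of g' * t.prod = (of a * t.prod)⁻¹ * (of g * (of a * t.prod)) := by
          simp [g', mul_assoc]
      _ = of g := by rw [← hw.eq, inv_mul_cancel_left]
  have hlist := NeWord.toList_eq_of_prod_eq
    (w₁ := (t.inv.append hki (.singleton g' hg')).append hki.symm t) (w₂ := .singleton g hg)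
    (by simpa [mul_assoc] using hconj)
  have hlen := congrArg List.length hlist
  simp only [NeWord.toList, List.length_append, List.length_singleton] at hlen
  have := List.length_pos_of_ne_nil t.toList_ne_nil
  omega

end Monoid.CoprodI

/-- In a free product of groups, if `w² ≠ 1` and `w²` lies in the `i`-th free
factor, then `w` lies in the `i`-th free factor. -/
theorem stmt_11 {ι : Type*} (G : ι → Type*) [∀ i, Group (G i)] (i : ι)
    (w : Monoid.CoprodI G) (hw : w ^ 2 ≠ 1)
    (h : w ^ 2 ∈ (Monoid.CoprodI.of : G i →* Monoid.CoprodI G).range) :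
    w ∈ (Monoid.CoprodI.of : G i →* Monoid.CoprodI G).range := by
  obtain ⟨g, hg⟩ := h
  have hg1 : g ≠ 1 := by
    rintro rfl
    exact hw (by rw [← hg, map_one])
  exact Monoid.CoprodI.mem_range_of_commute_of hg1 (hg ▸ Commute.self_pow w 2)
end

section
/- Let G be a group, H a subgroup of G, and Γ = G *_H G the amalgamated free product of two copies of G along the identity map of H, with the two canonical homomorphisms ι₁, ι₂ : G → Γ. Then for every g ∈ G, ι₁(g) = ι₂(g) in Γ if and only if g ∈ H. -/
/-- In the double `Γ = G *_H G` (the amalgamated free product of two copies of `G`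
along the identity of `H`), the images of `g ∈ G` under the two canonical maps are
equal iff `g ∈ H`. -/
theorem stmt_14 (G : Type*) [Group G] (H : Subgroup G) (g : G) :
    Monoid.PushoutI.of (φ := fun _ : Bool => H.subtype) true g =
      Monoid.PushoutI.of (φ := fun _ : Bool => H.subtype) false g ↔ g ∈ H := by
  set φ : Bool → (H →* G) := fun _ => H.subtype with hφ
  have hinj : ∀ i, Function.Injective (φ i) := fun _ => H.subtype_injective
  constructor
  · intro h
    have hmem : Monoid.PushoutI.of (φ := φ) true g ∈
        (Monoid.PushoutI.of (φ := φ) true).range ⊓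
          (Monoid.PushoutI.of (φ := φ) false).range := by
      refine ⟨⟨g, rfl⟩, ⟨g, h.symm⟩⟩
    rw [Monoid.PushoutI.inf_of_range_eq_base_range hinj (by simp : true ≠ false)] at hmem
    obtain ⟨x, hx⟩ := hmem
    have : Monoid.PushoutI.of (φ := φ) true (φ true x) =
        Monoid.PushoutI.of (φ := φ) true g := by
      rw [Monoid.PushoutI.of_apply_eq_base, hx]
    have := Monoid.PushoutI.of_injective hinj true this
    rw [← this]
    exact x.2
  · intro hg
    have h1 := Monoid.PushoutI.of_apply_eq_base φ true ⟨g, hg⟩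
    have h2 := Monoid.PushoutI.of_apply_eq_base φ false ⟨g, hg⟩
    simpa [φ] using h1.trans h2.symm
end
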